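/- Let L ∈ GL(m, ℝ) have all eigenvalues of modulus less than 1 and ε > 0. Define the boundary map b : ℝ^m × S^{m−1} → ℝ^m × S^{m−1} by b(x, n) := (L(x) + ε L_⊥(n), L_⊥(n)), and x(n) := ε Σ_{k=0}^∞ L^k(L_⊥^{-k}(n)). Then the graph {(x(n), n) : n ∈ S^{m−1}} is invariant under b, i.e., b(x(n), n) = (x(L_⊥(n)), L_⊥(n)) for all n ∈ S^{m−1}. -/

import Mathlib

noncomputable section

/-- All (complex) eigenvalues of the real matrix `M` have modulus less than 1. -/
def specLt1 {m : ℕ} (M : Matrix (Fin m) (Fin m) ℝ) : Prop :=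
  ∀ μ ∈ spectrum ℂ (M.map Complex.ofReal), ‖μ‖ < 1

/-- The induced map `L_⊥(n) = (Lᵀ)⁻¹ n / ‖(Lᵀ)⁻¹ n‖` on unit normal vectors. -/
def Lperp {m : ℕ} (M : Matrix (Fin m) (Fin m) ℝ) (n : EuclideanSpace ℝ (Fin m)) :
    EuclideanSpace ℝ (Fin m) :=
  ‖Matrix.toEuclideanLin M.transpose⁻¹ n‖⁻¹ • Matrix.toEuclideanLin M.transpose⁻¹ n

/-- The inverse `L_⊥⁻¹(n) = Lᵀ n / ‖Lᵀ n‖`. -/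
def LperpInv {m : ℕ} (M : Matrix (Fin m) (Fin m) ℝ) (n : EuclideanSpace ℝ (Fin m)) :
    EuclideanSpace ℝ (Fin m) :=
  ‖Matrix.toEuclideanLin M.transpose n‖⁻¹ • Matrix.toEuclideanLin M.transpose n

/-- `x(n) = ε ∑ₖ L^k (L_⊥^{-k}(n))`. -/
def xBd {m : ℕ} (M : Matrix (Fin m) (Fin m) ℝ) (ε : ℝ) (n : EuclideanSpace ℝ (Fin m)) :
    EuclideanSpace ℝ (Fin m) :=
  ε • ∑' k : ℕ, (fun v => Matrix.toEuclideanLin M v)^[k] ((LperpInv M)^[k] n)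

/-- The boundary map `b(x, n) = (L(x) + ε L_⊥(n), L_⊥(n))`. -/
def bMap {m : ℕ} (M : Matrix (Fin m) (Fin m) ℝ) (ε : ℝ)
    (p : EuclideanSpace ℝ (Fin m) × EuclideanSpace ℝ (Fin m)) :
    EuclideanSpace ℝ (Fin m) × EuclideanSpace ℝ (Fin m) :=
  (Matrix.toEuclideanLin M p.1 + ε • Lperp M p.2, Lperp M p.2)

/-!
Shifting the summation index in the series for `x(L_⊥ n)` and using `L_⊥⁻¹ (L_⊥ n) = n` gives
`x(L_⊥ n) = ε L_⊥ n + L x(n)`, which is the first component of `b(x(n), n)`. The series converge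
absolutely: the iterates `L_⊥^{-k} n` stay in the unit ball (after the first step), and `‖L^k‖`
decays geometrically by Gelfand's formula, applied to the complexification of `L` because the
spectral hypothesis is about complex eigenvalues.
-/

open Function Filter

section SpectralRadius

variable {A : Type*} [NormedRing A] [NormedAlgebra ℂ A] [CompleteSpace A]

theorem summable_norm_pow_of_spectralRadius_lt_one {a : A} (ha : spectralRadius ℂ a < 1) :
    Summable fun k : ℕ => ‖a ^ k‖ := by
  obtain ⟨r, hρr, hr⟩ := ENNReal.lt_iff_exists_nnreal_btwn.mp ha
  have hr1 : (r : ℝ) < 1 := mod_cast hr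
  have hroot : ∀ᶠ k : ℕ in atTop, ‖a ^ k‖ ^ (1 / k : ℝ) < r := by
    have gelfand := spectrum.pow_norm_pow_one_div_tendsto_nhds_spectralRadius a
    filter_upwards [gelfand.eventually_lt_const hρr] with k hk
    exact (ENNReal.ofReal_lt_iff_lt_toReal (by positivity) ENNReal.coe_ne_top).mp hk
  refine summable_of_isBigO_nat (summable_geometric_of_lt_one r.coe_nonneg hr1) ?_
  refine Asymptotics.IsBigO.of_bound 1 ?_
  filter_upwards [hroot, eventually_ne_atTop 0] with k hk hk0
  rw [one_mul, norm_norm, Real.norm_of_nonneg (by positivity)]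
  calc ‖a ^ k‖ = (‖a ^ k‖ ^ (1 / k : ℝ)) ^ k := by
        rw [one_div, Real.rpow_inv_natCast_pow (norm_nonneg _) hk0]
    _ ≤ (r : ℝ) ^ k := pow_le_pow_left₀ (by positivity) hk.le k

theorem summable_norm_pow_of_forall_norm_lt_one {a : A} (ha : ∀ z ∈ spectrum ℂ a, ‖z‖ < 1) :
    Summable fun k : ℕ => ‖a ^ k‖ := by
  rcases subsingleton_or_nontrivial A with hA | hA
  · simp only [Subsingleton.elim _ (0 : A), norm_zero]
    exact summable_zero
  · refine summable_norm_pow_of_spectralRadius_lt_one ?_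
    exact_mod_cast spectrum.spectralRadius_lt_of_forall_lt a (r := 1) fun z hz => mod_cast ha z hz

end SpectralRadius

theorem tsum_iterate_apply_iterate_eq_add {E G : Type*} [AddCommMonoid E] [TopologicalSpace E]
    [ContinuousAdd E] [T2Space E] [FunLike G E E] [AddMonoidHomClass G E E] (T : G)
    (hT : Continuous T) (P : E → E) {y : E} (h : Summable fun k : ℕ => T^[k] (P^[k] (P y))) :
    ∑' k : ℕ, T^[k] (P^[k] y) = y + T (∑' k : ℕ, T^[k] (P^[k] (P y))) := by
  have hshift : ∀ k : ℕ, T^[k + 1] (P^[k + 1] y) = T (T^[k] (P^[k] (P y))) := fun k => by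
    rw [iterate_succ_apply P, iterate_succ_apply' (⇑T)]
  rw [tsum_eq_zero_add' (by simp only [hshift]; exact h.map T hT), h.map_tsum T hT]
  simp only [iterate_zero_apply, hshift]

namespace EuclideanSpace

variable {ι : Type*} [Fintype ι]

def complexify (v : EuclideanSpace ℝ ι) : EuclideanSpace ℂ ι :=
  WithLp.toLp 2 fun i => (v i : ℂ)

@[simp]
theorem norm_complexify (v : EuclideanSpace ℝ ι) : ‖complexify v‖ = ‖v‖ := by
  simp [complexify, EuclideanSpace.norm_eq]

theorem complexify_toEuclideanLin [DecidableEq ι] (A : Matrix ι ι ℝ) (v : EuclideanSpace ℝ ι) :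
    complexify (Matrix.toEuclideanLin A v) =
      Matrix.toEuclideanLin (A.map Complex.ofReal) (complexify v) := by
  ext i
  simp [complexify, Matrix.mulVec, dotProduct]

end EuclideanSpace

open EuclideanSpace in
theorem Matrix.norm_iterate_toEuclideanLin_le {ι : Type*} [Fintype ι] [DecidableEq ι]
    (A : Matrix ι ι ℝ) (k : ℕ) (v : EuclideanSpace ℝ ι) :
    ‖(toEuclideanLin A)^[k] v‖ ≤ ‖toEuclideanCLM (𝕜 := ℂ) (A.map Complex.ofReal) ^ k‖ * ‖v‖ := by
  have hsemi : Semiconj complexify (toEuclideanLin A)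
      (toEuclideanCLM (𝕜 := ℂ) (A.map Complex.ofReal)) :=
    complexify_toEuclideanLin A
  rw [← norm_complexify, hsemi.iterate_right k v, ← pow_apply_eq_iterate, ← norm_complexify v]
  exact ContinuousLinearMap.le_opNorm _ _

section Lperp

variable {m : ℕ} {M : Matrix (Fin m) (Fin m) ℝ}

theorem summable_norm_toEuclideanCLM_map_pow (hspec : specLt1 M) :
    Summable fun k : ℕ => ‖Matrix.toEuclideanCLM (𝕜 := ℂ) (M.map Complex.ofReal) ^ k‖ :=
  summable_norm_pow_of_forall_norm_lt_one (by rwa [AlgEquiv.spectrum_eq])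

theorem norm_LperpInv_le_one (v : EuclideanSpace ℝ (Fin m)) : ‖LperpInv M v‖ ≤ 1 := by
  rw [LperpInv, norm_smul, norm_inv, norm_norm]
  exact inv_mul_le_one_of_le₀ le_rfl (norm_nonneg _)

theorem norm_iterate_LperpInv_le (k : ℕ) (n : EuclideanSpace ℝ (Fin m)) :
    ‖(LperpInv M)^[k] n‖ ≤ max 1 ‖n‖ := by
  cases k with
  | zero => exact le_max_right _ _
  | succ k =>
    rw [iterate_succ_apply']
    exact (norm_LperpInv_le_one _).trans (le_max_left _ _)

theorem summable_iterate_toEuclideanLin_iterate_LperpInv (hspec : specLt1 M)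
    (n : EuclideanSpace ℝ (Fin m)) :
    Summable fun k : ℕ => (fun v => Matrix.toEuclideanLin M v)^[k] ((LperpInv M)^[k] n) := by
  have hbound := (summable_norm_toEuclideanCLM_map_pow hspec).mul_right (max 1 ‖n‖)
  refine hbound.of_norm_bounded fun k => ?_
  exact (M.norm_iterate_toEuclideanLin_le k _).trans
    (mul_le_mul_of_nonneg_left (norm_iterate_LperpInv_le k n) (norm_nonneg _))

theorem LperpInv_Lperp (hdet : IsUnit M.det) (n : EuclideanSpace ℝ (Fin m)) :
    LperpInv M (Lperp M n) = ‖n‖⁻¹ • n := by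
  set u := Matrix.toEuclideanLin M.transpose⁻¹ n
  have hu : Matrix.toEuclideanLin M.transpose u = n := by
    change Matrix.toEuclideanCLM (𝕜 := ℝ) M.transpose
      (Matrix.toEuclideanCLM (𝕜 := ℝ) M.transpose⁻¹ n) = n
    rw [← mul_apply_eq_comp, ← map_mul,
      Matrix.mul_nonsing_inv _ (by rwa [Matrix.det_transpose]), map_one,
      one_apply_eq_self]
  rcases eq_or_ne n 0 with rfl | hn
  · simp [LperpInv, Lperp]
  have hu0 : ‖u‖ ≠ 0 := by
    rw [norm_ne_zero_iff]
    rintro hu'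
    rw [hu', map_zero] at hu
    exact hn hu.symm
  rw [Lperp, LperpInv, map_smul, hu, norm_smul, norm_inv, norm_norm, smul_smul, mul_inv, inv_inv,
    mul_right_comm, mul_inv_cancel₀ hu0, one_mul]

end Lperp

theorem stmt17_general {m : ℕ} (M : Matrix (Fin m) (Fin m) ℝ) (hdet : IsUnit M.det)
    (hspec : specLt1 M) (ε : ℝ) :
    ∀ n : EuclideanSpace ℝ (Fin m), ‖n‖ = 1 →
      bMap M ε (xBd M ε n, n) = (xBd M ε (Lperp M n), Lperp M n) := by
  intro n hn
  have hinv : LperpInv M (Lperp M n) = n := by rw [LperpInv_Lperp hdet, hn, inv_one, one_smul]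
  have hseries := tsum_iterate_apply_iterate_eq_add (Matrix.toEuclideanLin M)
    (LinearMap.continuous_of_finiteDimensional _) (LperpInv M) (y := Lperp M n)
    (by simpa only [hinv] using summable_iterate_toEuclideanLin_iterate_LperpInv hspec n)
  rw [hinv] at hseries
  simp only [bMap, xBd, hseries, smul_add, map_smul, add_comm]

/-- The graph `{(x(n), n) : n ∈ S^{m-1}}` is invariant under the boundary map `b`. -/
theorem stmt17 {m : ℕ} (M : Matrix (Fin m) (Fin m) ℝ) (hdet : IsUnit M.det)
    (hspec : specLt1 M) (ε : ℝ) (hε : 0 < ε) :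
    ∀ n : EuclideanSpace ℝ (Fin m), ‖n‖ = 1 →
      bMap M ε (xBd M ε n, n) = (xBd M ε (Lperp M n), Lperp M n) :=
  stmt17_general M hdet hspec ε
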